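/- arXiv:0802.0054 — 3 statements merged into one kernel-verified Lean document; each statement's English description precedes it below -/
import Mathlib

section
/- Let N(X) = X^5 - 2aX^4 + a(a^2+3a-1)X^3 - 3a^2(a-1)X^2 + a^3(a-3)X + a^4 and D(X) = X^2(X-a)^2, and let Br(a,b;X) = X^5 + (a-3)X^4 - (a-b-3)X^3 + (a^2-a-2b-1)X^2 + bX + a be the Brumer polynomial. Then for all a, b there exists c ∈ Q(a,b) such that (X^5/a^4)·(N(a/X) - c·D(a/X)) = Br(a,b;X); equivalently, (X^5/a^4)·N(a/X) - Br(a,b;X) is divisible by (X^5/a^4)·D(a/X) as rational functions, with quotient in Q(a,b). -/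
open Polynomial

noncomputable abbrev Qab : Type := RatFunc (RatFunc ℚ)

noncomputable def qa : Qab := RatFunc.C RatFunc.X
noncomputable def qb : Qab := RatFunc.X

/-- The numerator `N(X)` of the isogeny `λ*`. -/
noncomputable def Npoly (a : Qab) : Qab[X] :=
  X ^ 5 - C (2 * a) * X ^ 4 + C (a * (a ^ 2 + 3 * a - 1)) * X ^ 3
    - C (3 * a ^ 2 * (a - 1)) * X ^ 2 + C (a ^ 3 * (a - 3)) * X + C (a ^ 4)

/-- The denominator `D(X) = X²(X-a)²`. -/
noncomputable def Dpoly (a : Qab) : Qab[X] := X ^ 2 * (X - C a) ^ 2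

/-- Brumer's quintic polynomial. -/
noncomputable def Brumer (a b : Qab) : Qab[X] :=
  X ^ 5 + C (a - 3) * X ^ 4 - C (a - b - 3) * X ^ 3
    + C (a ^ 2 - a - 2 * b - 1) * X ^ 2 + C b * X + C a

lemma brumer_key {K : Type*} [Field K] (a b x : K) (ha : a ≠ 0) (hx : x ≠ 0) :
    x ^ 5 / a ^ 4 * (((a/x) ^ 5 - 2*a*(a/x) ^ 4 + a*(a^2+3*a-1)*(a/x)^3
      - 3*a^2*(a-1)*(a/x)^2 + a^3*(a-3)*(a/x) + a^4)
      - (-(2*a+b)) * ((a/x)^2 * (a/x - a)^2)) =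
    x^5 + (a-3)*x^4 - (a-b-3)*x^3 + (a^2-a-2*b-1)*x^2 + b*x + a := by
  have hyx : a / x * x = a := div_mul_cancel₀ a hx
  set y := a / x with hy
  rw [div_mul_eq_mul_div, div_eq_iff (pow_ne_zero 4 ha), ← hyx]
  ring

/-- There is `c ∈ ℚ(a,b)` with `(X⁵/a⁴)·(N(a/X) - c·D(a/X)) = Br(a,b;X)`,
stated as an identity of functions on `ℚ(a,b) \ {0}` (equivalently of rational
functions, since the field is infinite). -/
theorem brumer_from_isogeny :
    ∃ c : Qab, ∀ x : Qab, x ≠ 0 →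
      x ^ 5 / qa ^ 4 * ((Npoly qa).eval (qa / x) - c * (Dpoly qa).eval (qa / x)) =
        (Brumer qa qb).eval x := by
  have ha : qa ≠ 0 := by
    simp only [qa, ne_eq, _root_.map_eq_zero]
    exact RatFunc.X_ne_zero
  refine ⟨-(2 * qa + qb), fun x hx => ?_⟩
  have := brumer_key qa qb x ha hx
  simp only [Npoly, Dpoly, Brumer, eval_add, eval_sub, eval_mul, eval_pow, eval_C, eval_X]
  convert this using 3
end

section
/- On the elliptic curve E : 47y^2 = 4x^3 + 28x^2 + 24x + 47 over Q, the points P_1 = (-1, 1) and P_2 = (0, -1) are rational points, and P_1 + 3P_2 ≠ O, and P_2 has infinite order. -/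
open WeierstrassCurve.Affine

/-- The Weierstrass model of the curve `𝒞 : 47y² = 4x³ + 28x² + 24x + 47`,
obtained by the standard change of variables `(x, y) ↦ (188x, 8836y)`. -/
noncomputable def E10 : WeierstrassCurve.Affine ℚ :=
  { a₁ := 0, a₂ := 1316, a₃ := 0, a₄ := 212064, a₆ := 78074896 }

/-! A point of finite order `n` on `E10` would give either a nonzero `2`-torsion point
`(n / 2) • P₂` (`n` even) or a half `((n + 1) / 2) • P₂` of `P₂` (`n` odd). The first is ruled
out because `x³ + 1316x² + 212064x + 78074896` has no root mod `3`, the second because a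
tangent line meeting the curve again at `x = 0` would produce a rational root of a quartic
that has no root mod `13`; both polynomials are monic, so their rational roots are integers. -/

open Polynomial

theorem addOrderOf_eq_zero_of_forall_add_self_ne {G : Type*} [AddMonoid G] {g : G}
    (h_two_torsion : ∀ P : G, P + P = 0 → P = 0) (h_half : ∀ Q : G, Q + Q ≠ g) :
    addOrderOf g = 0 := by
  by_contra hn
  obtain ⟨k, hk⟩ | ⟨k, hk⟩ := Nat.even_or_odd (addOrderOf g)
  · have hkg : k • g = 0 := h_two_torsion _ (by rw [← add_nsmul, ← hk, addOrderOf_nsmul_eq_zero])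
    have := Nat.le_of_dvd (by omega) (addOrderOf_dvd_of_nsmul_eq_zero hkg)
    omega
  · apply h_half ((k + 1) • g)
    rw [← add_nsmul, show k + 1 + (k + 1) = addOrderOf g + 1 by omega, succ_nsmul,
      addOrderOf_nsmul_eq_zero, zero_add]

theorem Polynomial.Monic.aeval_rat_ne_zero {f : ℤ[X]} (hf : f.Monic) {R : Type*} [CommRing R]
    (h : ∀ a : R, aeval a f ≠ 0) (q : ℚ) : aeval q f ≠ 0 := by
  intro hq
  obtain ⟨n, rfl⟩ := isInteger_of_is_root_of_monic hf hq
  rw [aeval_algebraMap_apply, map_eq_zero_iff _ (algebraMap ℤ ℚ).injective_int] at hq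
  exact h (algebraMap ℤ R n) (by rw [aeval_algebraMap_apply, hq, map_zero])

namespace WeierstrassCurve.Affine.Point

variable {F : Type*} [Field F] [DecidableEq F] {W : WeierstrassCurve.Affine F}

lemma some_add_self_eq_zero_iff {x y : F} (h : W.Nonsingular x y) :
    some x y h + some x y h = 0 ↔ y = W.negY x y := by
  refine ⟨fun h0 ↦ ?_, add_self_of_Y_eq⟩
  by_contra hy
  exact some_ne_zero _ ((add_self_of_Y_ne hy).symm.trans h0)

end WeierstrassCurve.Affine.Point

lemma cubic_ne_zero (x : ℚ) : x ^ 3 + 1316 * x ^ 2 + 212064 * x + 78074896 ≠ 0 := by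
  have hf : (X ^ 3 + 1316 * X ^ 2 + 212064 * X + 78074896 : ℤ[X]).Monic := by monicity!
  simpa only [map_add, map_mul, map_pow, aeval_X, map_ofNat] using
    hf.aeval_rat_ne_zero (R := ZMod 3)
      (by simp only [map_add, map_mul, map_pow, aeval_X, map_ofNat]; decide) x

lemma quartic_ne_zero (l : ℚ) : l ^ 4 - 2632 * l ^ 2 + 70688 * l + 883600 ≠ 0 := by
  have hf : (X ^ 4 - 2632 * X ^ 2 + 70688 * X + 883600 : ℤ[X]).Monic := by monicity!
  simpa only [map_add, map_sub, map_mul, map_pow, aeval_X, map_ofNat] using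
    hf.aeval_rat_ne_zero (R := ZMod 13)
      (by simp only [map_add, map_sub, map_mul, map_pow, aeval_X, map_ofNat]; decide) l

namespace E10

lemma equation_iff (x y : ℚ) :
    E10.Equation x y ↔ y ^ 2 = x ^ 3 + 1316 * x ^ 2 + 212064 * x + 78074896 := by
  rw [WeierstrassCurve.Affine.equation_iff]
  norm_num [E10]

lemma negY_eq (x y : ℚ) : E10.negY x y = -y := by
  simp [negY, E10]

lemma addX_eq (x₁ x₂ l : ℚ) : E10.addX x₁ x₂ l = l ^ 2 - 1316 - x₁ - x₂ := by
  simp [addX, E10]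

lemma slope_self_mul {x y : ℚ} (hy : y ≠ E10.negY x y) :
    E10.slope x x y y * (2 * y) = 3 * x ^ 2 + 2632 * x + 212064 := by
  rw [slope_of_Y_ne rfl hy, div_mul_eq_mul_div, div_eq_iff (sub_ne_zero.mpr hy)]
  simp only [E10, zero_mul, sub_zero, negY, sub_neg_eq_add]
  ring

lemma eq_zero_of_add_self_eq_zero (P : E10.Point) (h : P + P = 0) : P = 0 := by
  cases P with
  | zero => rfl
  | @some x y hP =>
    rw [Point.some_add_self_eq_zero_iff, negY_eq] at h
    have hy : y = 0 := by linarith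
    exact absurd (by rw [← (equation_iff x y).mp hP.1, hy]; ring) (cubic_ne_zero x)

/-- The tangent line `Y = l X + ν` at `(x, y)` meets the curve again above `X = l² - 1316 - 2x`;
if that is `0`, then `(0, ν)` lies on the curve, so `ν = ±8836`, and eliminating `x` leaves the
quartic `quartic_ne_zero` at `±l`. -/
lemma tangent_addX_ne_zero {x y l : ℚ}
    (hQ : y ^ 2 = x ^ 3 + 1316 * x ^ 2 + 212064 * x + 78074896)
    (hl : l * (2 * y) = 3 * x ^ 2 + 2632 * x + 212064) : l ^ 2 - 1316 - 2 * x ≠ 0 := by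
  intro hx
  have hν : (y - l * x - 8836) * (y - l * x + 8836) = 0 := by
    linear_combination hQ - x * hl + x ^ 2 * hx
  have hν' : 2 * l * (y - l * x) = 212064 - x ^ 2 := by linear_combination hl - 2 * x * hx
  rcases mul_eq_zero.mp hν with h | h
  · apply quartic_ne_zero l
    linear_combination (l ^ 2 - 1316 + 2 * x) * hx + 4 * hν' - 8 * l * h
  · apply quartic_ne_zero (-l)
    linear_combination (l ^ 2 - 1316 + 2 * x) * hx + 4 * hν' - 8 * l * h

lemma nonsingular_P₁ : E10.Nonsingular (188 * (-1)) (8836 * 1) := by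
  rw [nonsingular_iff, WeierstrassCurve.Affine.equation_iff]
  norm_num [E10]

lemma nonsingular_P₂ : E10.Nonsingular (188 * 0) (8836 * (-1)) := by
  rw [nonsingular_iff, WeierstrassCurve.Affine.equation_iff]
  norm_num [E10]

noncomputable def P₁ : E10.Point := .some _ _ nonsingular_P₁

noncomputable def P₂ : E10.Point := .some _ _ nonsingular_P₂

lemma add_self_ne_P₂ (Q : E10.Point) : Q + Q ≠ P₂ := by
  cases Q with
  | zero => exact (Point.some_ne_zero _).symm
  | @some x y hQ =>
    intro h
    by_cases hy : y = E10.negY x y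
    · exact Point.some_ne_zero _ ((Point.add_self_of_Y_eq hy).symm.trans h).symm
    · rw [Point.add_self_of_Y_ne hy, P₂, Point.some.injEq, addX_eq] at h
      exact tangent_addX_ne_zero ((equation_iff x y).mp hQ.1) (slope_self_mul hy)
        (by linear_combination h.1)

lemma nonsingular_two_smul_P₂ : E10.Nonsingular (-1172) (-5228) := by
  rw [nonsingular_iff, WeierstrassCurve.Affine.equation_iff]
  norm_num [E10]

lemma two_smul_P₂ : (2 : ℤ) • P₂ = .some _ _ nonsingular_two_smul_P₂ := by
  have hy : (8836 * (-1) : ℚ) ≠ E10.negY (188 * 0) (8836 * (-1)) := by rw [negY_eq]; norm_num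
  rw [two_zsmul, P₂, Point.add_self_of_Y_ne hy, Point.some.injEq, slope_of_Y_ne rfl hy]
  norm_num [addX, addY, negAddY, negY, E10]

lemma P₁_add_three_smul_P₂_ne_zero : P₁ + (3 : ℤ) • P₂ ≠ 0 := by
  have hx : (188 * 0 : ℚ) ≠ -1172 := by norm_num
  rw [show (3 : ℤ) • P₂ = P₂ + (2 : ℤ) • P₂ by module, two_smul_P₂, P₂, Point.add_of_X_ne hx, P₁,
    Point.add_of_X_ne]
  · exact Point.some_ne_zero _
  · rw [slope_of_X_ne hx]
    norm_num [addX, E10]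

lemma addOrderOf_P₂ : addOrderOf P₂ = 0 :=
  addOrderOf_eq_zero_of_forall_add_self_ne eq_zero_of_add_self_eq_zero add_self_ne_P₂

end E10

/-- On `𝒞 : 47y² = 4x³ + 28x² + 24x + 47`, the points `P₁ = (-1,1)` and
`P₂ = (0,-1)` are rational points; under the change of variables
`(x,y) ↦ (188x, 8836y)` to the Weierstrass model `E10` they become nonsingular
rational points, and there `P₁ + 3P₂ ≠ O` and `P₂ has infinite order`. -/
theorem kry_curve_points :
    (47 * (1 : ℚ) ^ 2 = 4 * (-1 : ℚ) ^ 3 + 28 * (-1 : ℚ) ^ 2 + 24 * (-1) + 47) ∧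
    (47 * (-1 : ℚ) ^ 2 = 4 * (0 : ℚ) ^ 3 + 28 * (0 : ℚ) ^ 2 + 24 * 0 + 47) ∧
    ∃ (h₁ : E10.Nonsingular (188 * (-1) : ℚ) (8836 * 1 : ℚ))
      (h₂ : E10.Nonsingular (188 * 0 : ℚ) (8836 * (-1) : ℚ)),
      Point.some _ _ h₁ + (3 : ℤ) • Point.some _ _ h₂ ≠ 0 ∧
      addOrderOf (Point.some _ _ h₂) = 0 :=
  ⟨by norm_num, by norm_num, E10.nonsingular_P₁, E10.nonsingular_P₂,
    E10.P₁_add_three_smul_P₂_ne_zero, E10.addOrderOf_P₂⟩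
end

section
/- Let g(X) = X^3 - pX^2 + qX - r be a monic cubic over Q with discriminant D ≠ 0. Then the point P_g = (4(p^2 - 3q), 4(2p^3 - 9pq + 27r)) lies on the elliptic curve E_D : y^2 = x^3 - 432D, and the polynomial F(P_g;X) = X^3 - (x(P_g)/12)X - (y(P_g)/108) is the depressed cubic obtained from g, i.e., F(P_g; X) = g(X + p/3) up to the substitution; in particular g and F(P_g;X) generate the same splitting field over Q. -/
open Polynomial

/-- For a monic cubic `g(X) = X³ - pX² + qX - r` over `ℚ` with discriminant
`D = p²q² - 4q³ - 4p³r + 18pqr - 27r² ≠ 0`: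
(i) the point `P_g = (4(p² - 3q), 4(2p³ - 9pq + 27r))` lies on `E_D : y² = x³ - 432D`;
(ii) `F(P_g;X) = X³ - (x(P_g)/12)X - (y(P_g)/108)` equals the depressed cubic
`g(X + p/3)`; in particular they generate the same splitting field over `ℚ`. -/
theorem cubic_to_point (p q r D : ℚ)
    (hD : D = p ^ 2 * q ^ 2 - 4 * q ^ 3 - 4 * p ^ 3 * r + 18 * p * q * r - 27 * r ^ 2)
    (hD0 : D ≠ 0) :
    (4 * (2 * p ^ 3 - 9 * p * q + 27 * r)) ^ 2 =
        (4 * (p ^ 2 - 3 * q)) ^ 3 - 432 * D ∧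
    (X ^ 3 - C (4 * (p ^ 2 - 3 * q) / 12) * X - C (4 * (2 * p ^ 3 - 9 * p * q + 27 * r) / 108)
        : ℚ[X]) =
      (X ^ 3 - C p * X ^ 2 + C q * X - C r).comp (X + C (p / 3)) := by
  constructor
  · subst hD; ring
  · refine Polynomial.funext fun x => ?_
    simp only [eval_comp, eval_sub, eval_add, eval_mul, eval_pow, eval_X, eval_C]
    ring
end
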